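/- arXiv:1004.5407 — 2 statements merged into one kernel-verified Lean document; each statement's English description precedes it below -/
import Mathlib

section
/- For all p, q ∈ ℝ^N and c ≥ 1, with p₀ = √(c² + |p|²) and q₀ = √(c² + |q|²), the quantity g defined by g² = 2(p₀q₀ - p·q - c²) satisfies g² = 2(c²|p-q|² + |p×q|²)/(p₀q₀ + p·q + c²) (in dimension N=3), and hence c|p-q|/√(p₀q₀) ≤ g ≤ |p-q|. -/
/-!
The identity is the factorisation `(p₀q₀)² - (p·q + c²)² = c²|p - q|² + (|p|²|q|² - (p·q)²)`,
obtained by expanding `p₀² = c² + |p|²` and `q₀² = c² + |q|²`, followed by Lagrange's identity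
for the cross product. Cauchy–Schwarz in `ℝ²` gives `c² + |p||q| ≤ p₀q₀`, so both factors
`p₀q₀ ∓ (p·q + c²)` are nonnegative, the second one at most `2p₀q₀` and positive for `c ≠ 0`;
dividing the factorisation by it yields the lower bound. The upper bound is AM-GM, `2p₀q₀ ≤ p₀² + q₀²`.
-/

open scoped RealInnerProductSpace

noncomputable section

namespace RelativisticMomentum

variable {E : Type*} [NormedAddCommGroup E] (c : ℝ) (p q : E)

def energy : ℝ := √(c ^ 2 + ‖p‖ ^ 2)

lemma sq_energy : energy c p ^ 2 = c ^ 2 + ‖p‖ ^ 2 :=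
  Real.sq_sqrt (by positivity)

lemma energy_nonneg : 0 ≤ energy c p := Real.sqrt_nonneg _

lemma sq_add_norm_mul_norm_le_energy_mul_energy :
    c ^ 2 + ‖p‖ * ‖q‖ ≤ energy c p * energy c q := by
  have hp := sq_energy c p
  have hq := sq_energy c q
  have hpq : 0 ≤ energy c p * energy c q := mul_nonneg (energy_nonneg c p) (energy_nonneg c q)
  -- Cauchy–Schwarz for the vectors `(c, ‖p‖)` and `(c, ‖q‖)` of `ℝ²`.
  have hsq : (c ^ 2 + ‖p‖ * ‖q‖) ^ 2 ≤ (energy c p * energy c q) ^ 2 := by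
    rw [mul_pow, hp, hq]
    nlinarith [sq_nonneg (c * (‖p‖ - ‖q‖))]
  exact abs_le_of_sq_le_sq' hsq hpq |>.2

variable [InnerProductSpace ℝ E]

def relMomentum : ℝ := √(2 * (energy c p * energy c q - ⟪p, q⟫ - c ^ 2))

lemma inner_add_sq_le_energy_mul_energy : ⟪p, q⟫ + c ^ 2 ≤ energy c p * energy c q := by
  linarith [sq_add_norm_mul_norm_le_energy_mul_energy c p q, real_inner_le_norm p q]

lemma energy_mul_energy_add_inner_add_sq_pos (hc : c ≠ 0) :
    0 < energy c p * energy c q + ⟪p, q⟫ + c ^ 2 := by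
  have hs : -(‖p‖ * ‖q‖) ≤ ⟪p, q⟫ := (abs_le.1 (abs_real_inner_le_norm p q)).1
  linarith [sq_add_norm_mul_norm_le_energy_mul_energy c p q, pow_pos (abs_pos.2 hc) 2, sq_abs c]

lemma sq_relMomentum :
    relMomentum c p q ^ 2 = 2 * (energy c p * energy c q - ⟪p, q⟫ - c ^ 2) :=
  Real.sq_sqrt (by linarith [inner_add_sq_le_energy_mul_energy c p q])

lemma relMomentum_nonneg : 0 ≤ relMomentum c p q := Real.sqrt_nonneg _

lemma energy_mul_energy_factorization :
    (energy c p * energy c q - ⟪p, q⟫ - c ^ 2) * (energy c p * energy c q + ⟪p, q⟫ + c ^ 2) =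
      c ^ 2 * ‖p - q‖ ^ 2 + (‖p‖ ^ 2 * ‖q‖ ^ 2 - ⟪p, q⟫ ^ 2) := by
  rw [norm_sub_sq_real]
  linear_combination energy c q ^ 2 * sq_energy c p + (c ^ 2 + ‖p‖ ^ 2) * sq_energy c q

lemma sq_relMomentum_eq_div (hc : c ≠ 0) :
    relMomentum c p q ^ 2 = 2 * (c ^ 2 * ‖p - q‖ ^ 2 + (‖p‖ ^ 2 * ‖q‖ ^ 2 - ⟪p, q⟫ ^ 2)) /
      (energy c p * energy c q + ⟪p, q⟫ + c ^ 2) := by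
  rw [sq_relMomentum, ← energy_mul_energy_factorization, ← mul_assoc,
    mul_div_cancel_right₀ _ (energy_mul_energy_add_inner_add_sq_pos c p q hc).ne']

lemma relMomentum_le_norm_sub : relMomentum c p q ≤ ‖p - q‖ := by
  refine Real.sqrt_le_iff.2 ⟨norm_nonneg _, ?_⟩
  rw [norm_sub_sq_real]
  linarith [sq_energy c p, sq_energy c q, two_mul_le_add_sq (energy c p) (energy c q)]

lemma mul_norm_sub_div_le_relMomentum :
    c * ‖p - q‖ / √(energy c p * energy c q) ≤ relMomentum c p q := by
  have hPQ : 0 ≤ energy c p * energy c q := mul_nonneg (energy_nonneg c p) (energy_nonneg c q)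
  have hsum := inner_add_sq_le_energy_mul_energy c p q
  have hA : 0 ≤ energy c p * energy c q - ⟪p, q⟫ - c ^ 2 := by linarith
  have hCauchySchwarz : 0 ≤ ‖p‖ ^ 2 * ‖q‖ ^ 2 - ⟪p, q⟫ ^ 2 := by
    rw [← real_inner_self_eq_norm_sq, ← real_inner_self_eq_norm_sq, sq]
    linarith [real_inner_mul_inner_self_le p q]
  have hsq : (c * ‖p - q‖) ^ 2 ≤ (relMomentum c p q * √(energy c p * energy c q)) ^ 2 :=
    calc (c * ‖p - q‖) ^ 2
        ≤ c ^ 2 * ‖p - q‖ ^ 2 + (‖p‖ ^ 2 * ‖q‖ ^ 2 - ⟪p, q⟫ ^ 2) := by linarith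
      _ = (energy c p * energy c q - ⟪p, q⟫ - c ^ 2) *
            (energy c p * energy c q + ⟪p, q⟫ + c ^ 2) :=
          (energy_mul_energy_factorization c p q).symm
      _ ≤ (energy c p * energy c q - ⟪p, q⟫ - c ^ 2) * (2 * (energy c p * energy c q)) :=
          mul_le_mul_of_nonneg_left (by linarith) hA
      _ = (relMomentum c p q * √(energy c p * energy c q)) ^ 2 := by
          rw [mul_pow, Real.sq_sqrt hPQ, sq_relMomentum]
          ring
  refine div_le_of_le_mul₀ (Real.sqrt_nonneg _) (relMomentum_nonneg c p q) ?_
  exact abs_le_of_sq_le_sq' hsq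
    (mul_nonneg (relMomentum_nonneg c p q) (Real.sqrt_nonneg _)) |>.2

end RelativisticMomentum

end

lemma EuclideanSpace.norm_crossProduct_sq (p q : EuclideanSpace ℝ (Fin 3)) :
    ‖(WithLp.equiv 2 (Fin 3 → ℝ)).symm
        (crossProduct (WithLp.equiv 2 (Fin 3 → ℝ) p) (WithLp.equiv 2 (Fin 3 → ℝ) q))‖ ^ 2
      = ‖p‖ ^ 2 * ‖q‖ ^ 2 - ⟪p, q⟫ ^ 2 := by
  simp only [← real_inner_self_eq_norm_sq, EuclideanSpace.inner_eq_star_dotProduct, star_trivial]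
  simp [cross_dot_cross, dotProduct_comm, sq]

open RelativisticMomentum in
/-- Relative momentum identity and bounds (dimension 3). -/
theorem stmt_0 (c : ℝ) (hc : 1 ≤ c) (p q : EuclideanSpace ℝ (Fin 3))
    (p0 q0 g : ℝ)
    (hp0 : p0 = Real.sqrt (c ^ 2 + ‖p‖ ^ 2))
    (hq0 : q0 = Real.sqrt (c ^ 2 + ‖q‖ ^ 2))
    (hg : g = Real.sqrt (2 * (p0 * q0 - ⟪p, q⟫ - c ^ 2))) :
    g ^ 2 = 2 * (c ^ 2 * ‖p - q‖ ^ 2 +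
        ‖(WithLp.equiv 2 (Fin 3 → ℝ)).symm
            (crossProduct (WithLp.equiv 2 (Fin 3 → ℝ) p) (WithLp.equiv 2 (Fin 3 → ℝ) q))‖ ^ 2)
        / (p0 * q0 + ⟪p, q⟫ + c ^ 2)
    ∧ c * ‖p - q‖ / Real.sqrt (p0 * q0) ≤ g
    ∧ g ≤ ‖p - q‖ := by
  have hp0 : p0 = energy c p := hp0
  have hq0 : q0 = energy c q := hq0
  have hg : g = relMomentum c p q := by rw [hg, hp0, hq0]; rfl
  subst hp0 hq0 hg
  rw [EuclideanSpace.norm_crossProduct_sq]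
  have hc0 : 0 < c := by linarith
  exact ⟨sq_relMomentum_eq_div c p q hc0.ne', mul_norm_sub_div_le_relMomentum c p q,
    relMomentum_le_norm_sub c p q⟩
end

section
/- (Invariance identity) Let c > 0 and p, q, p', q' ∈ ℝ^N with energies p₀ = √(c²+|p|²) etc., satisfying energy and momentum conservation p₀ + q₀ = p₀' + q₀' and p + q = p' + q'. Then for all t ∈ ℝ and x ∈ ℝ^N, with p̂ = cp/p₀ etc.: c³t²/q₀' + (q₀'/c)|x + t(p̂ - q̂')|² + c³t²/p₀' + (p₀'/c)|x + t(p̂ - p̂')|² = c³t²/p₀ + (p₀/c)|x|² + c³t²/q₀ + (q₀/c)|x + t(p̂ - q̂)|². -/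
/-!
Writing `y = x + t p̂`, each of the four terms `c³t²/v₀ + (v₀/c)|y - t v̂|²` equals
`c t² v₀ + (v₀/c)|y|² - 2t⟨y, v⟩` (the `|v|²` coming from `|v̂|²` combines with `c²` into `v₀²`).
This is affine in the four-momentum `(v₀, v)`, so conservation of energy and momentum
makes the two sides agree.
-/

open RealInnerProductSpace

theorem dispersion_norm_sub_smul_sq {E : Type*} [NormedAddCommGroup E] [InnerProductSpace ℝ E]
    {c v₀ : ℝ} {v : E} (hc : c ≠ 0) (hv₀ : v₀ ^ 2 = c ^ 2 + ‖v‖ ^ 2) (t : ℝ) (y : E) :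
    c ^ 3 * t ^ 2 / v₀ + (v₀ / c) * ‖y - t • ((c / v₀) • v)‖ ^ 2
      = c * t ^ 2 * v₀ + (v₀ / c) * ‖y‖ ^ 2 - 2 * t * ⟪y, v⟫ := by
  have hv₀ne : v₀ ≠ 0 := by
    rintro rfl
    nlinarith [sq_pos_of_ne_zero hc, sq_nonneg ‖v‖]
  rw [norm_sub_sq_real, norm_smul, norm_smul, real_inner_smul_right, real_inner_smul_right]
  simp only [Real.norm_eq_abs, mul_pow, sq_abs]
  field_simp
  linear_combination (-(c ^ 2 * t ^ 2)) * hv₀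

/-- The relativistic dispersion invariance identity under energy and momentum conservation. -/
theorem stmt_11 (N : ℕ) (c : ℝ) (hc : 0 < c)
    (p q p' q' : EuclideanSpace ℝ (Fin N))
    (p0 q0 p0' q0' : ℝ)
    (hp0 : p0 = Real.sqrt (c ^ 2 + ‖p‖ ^ 2))
    (hq0 : q0 = Real.sqrt (c ^ 2 + ‖q‖ ^ 2))
    (hp0' : p0' = Real.sqrt (c ^ 2 + ‖p'‖ ^ 2))
    (hq0' : q0' = Real.sqrt (c ^ 2 + ‖q'‖ ^ 2))
    (hE : p0 + q0 = p0' + q0')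
    (hM : p + q = p' + q')
    (t : ℝ) (x : EuclideanSpace ℝ (Fin N)) :
    c ^ 3 * t ^ 2 / q0' + (q0' / c) * ‖x + t • ((c / p0) • p - (c / q0') • q')‖ ^ 2
      + c ^ 3 * t ^ 2 / p0' + (p0' / c) * ‖x + t • ((c / p0) • p - (c / p0') • p')‖ ^ 2
    = c ^ 3 * t ^ 2 / p0 + (p0 / c) * ‖x‖ ^ 2
      + c ^ 3 * t ^ 2 / q0 + (q0 / c) * ‖x + t • ((c / p0) • p - (c / q0) • q)‖ ^ 2 := by
  set y := x + t • ((c / p0) • p) with hy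
  have hx : x = y - t • ((c / p0) • p) := by rw [hy]; abel
  have hshift : ∀ w : EuclideanSpace ℝ (Fin N), x + t • ((c / p0) • p - w) = y - t • w := by
    intro w
    rw [smul_sub, hy]; abel
  rw [hshift, hshift, hshift, hx]
  have key {v₀ : ℝ} {v : EuclideanSpace ℝ (Fin N)} (hv₀ : v₀ = Real.sqrt (c ^ 2 + ‖v‖ ^ 2)) :
      c ^ 3 * t ^ 2 / v₀ + (v₀ / c) * ‖y - t • ((c / v₀) • v)‖ ^ 2
        = c * t ^ 2 * v₀ + (v₀ / c) * ‖y‖ ^ 2 - 2 * t * ⟪y, v⟫ :=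
    dispersion_norm_sub_smul_sq hc.ne' (by rw [hv₀]; exact Real.sq_sqrt (by positivity)) t y
  have hinner : ⟪y, p⟫ + ⟪y, q⟫ = ⟪y, p'⟫ + ⟪y, q'⟫ := by
    rw [← inner_add_right, ← inner_add_right, hM]
  linear_combination key hq0' + key hp0' - key hp0 - key hq0
    - (c * t ^ 2 + ‖y‖ ^ 2 / c) * hE + 2 * t * hinner
end
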